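/- Let u be a recurrent infinite word, n ∈ ℕ, and m = inrC_u(n). Then the factors of length n at positions 0, 1, …, m−1 are pairwise distinct, and the factor f_n(m) is either equal to f_n(0), or is left special and equals f_n(i) for some 0 < i < m. -/
import Mathlib


/-- The factor of length `n` occurring at position `i` in the infinite word `u`. -/
def window {A : Type*} (u : ℕ → A) (n i : ℕ) : List A :=
  List.ofFn (fun j : Fin n => u (i + j))

/-- `w` is a factor of the infinite word `u`. -/
def IsFactor {A : Type*} (u : ℕ → A) (w : List A) : Prop :=
  ∃ i, window u w.length i = w

/-- `w` is right special: it extends to the right by two distinct letters. -/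
def RightSpecial {A : Type*} (u : ℕ → A) (w : List A) : Prop :=
  ∃ a b : A, a ≠ b ∧ IsFactor u (w ++ [a]) ∧ IsFactor u (w ++ [b])

/-- `w` is left special: it extends to the left by two distinct letters. -/
def LeftSpecial {A : Type*} (u : ℕ → A) (w : List A) : Prop :=
  ∃ a b : A, a ≠ b ∧ IsFactor u (a :: w) ∧ IsFactor u (b :: w)

/-- `u` is recurrent: every factor occurs at least twice (hence infinitely often). -/
def Recurrent {A : Type*} (u : ℕ → A) : Prop :=
  ∀ n i, ∃ j, i < j ∧ window u n j = window u n i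

/-- `u` is eventually periodic. -/
def EventuallyPeriodic {A : Type*} (u : ℕ → A) : Prop :=
  ∃ p N, 0 < p ∧ ∀ i, N ≤ i → u (i + p) = u i

/-- The set of `m` such that the first `m` factors of length `n` are pairwise distinct. -/
def inrSet {A : Type*} (u : ℕ → A) (n : ℕ) : Set ℕ :=
  {m | ∀ i j, i < j → j < m → window u n i ≠ window u n j}

/-- The initial non-repetitive complexity. -/
noncomputable def inrC {A : Type*} (u : ℕ → A) (n : ℕ) : ℕ := sSup (inrSet u n)


lemma window_eq_iff {A : Type*} (u : ℕ → A) (n i j : ℕ) :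
    window u n i = window u n j ↔ ∀ k < n, u (i + k) = u (j + k) := by
  unfold window
  rw [List.ofFn_inj]
  constructor
  · intro h k hk; exact congrFun h ⟨k, hk⟩
  · intro h; funext ⟨k, hk⟩; exact h k hk

lemma window_succ {A : Type*} (u : ℕ → A) (n i : ℕ) :
    window u (n+1) i = u i :: window u n (i+1) := by
  unfold window
  rw [List.ofFn_succ]
  simp [Fin.val_succ]
  funext j
  ring_nf

lemma window_length {A : Type*} (u : ℕ → A) (n i : ℕ) :
    (window u n i).length = n := by simp [window]

lemma inrSet_bdd {A : Type*} [Fintype A] (u : ℕ → A) (n : ℕ) :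
    BddAbove (inrSet u n) := by
  refine ⟨Fintype.card A ^ n, fun m hm => ?_⟩
  have hinj : Function.Injective (fun i : Fin m => (fun k : Fin n => u (i + k))) := by
    intro i j hij
    by_contra hne
    rcases lt_or_gt_of_ne (fun h : (i:ℕ) = (j:ℕ) => hne (Fin.ext h)) with h | h
    · exact hm i j h j.isLt (by unfold window; exact congrArg List.ofFn hij)
    · exact hm j i h i.isLt (by unfold window; exact congrArg List.ofFn hij.symm)
  simpa using Fintype.card_le_of_injective _ hinj

theorem stmt5 {A : Type*} [Fintype A] (u : ℕ → A) (hrec : Recurrent u)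
    (n m : ℕ) (hm : m = inrC u n) :
    (∀ i j, i < j → j < m → window u n i ≠ window u n j) ∧
      (window u n m = window u n 0 ∨
        (LeftSpecial u (window u n m) ∧
          ∃ i, 0 < i ∧ i < m ∧ window u n m = window u n i)) := by
  have hbdd := inrSet_bdd u n
  have h1 : (1 : ℕ) ∈ inrSet u n := by
    intro i j hij hj1; omega
  have hne : (inrSet u n).Nonempty := ⟨1, h1⟩
  have hmem : m ∈ inrSet u n := by
    rw [hm]; exact Nat.sSup_mem hne hbdd
  refine ⟨hmem, ?_⟩
  have hnot : m + 1 ∉ inrSet u n := by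
    intro h
    have h2 := le_csSup hbdd h
    have : inrC u n = sSup (inrSet u n) := rfl
    omega
  simp only [inrSet, Set.mem_setOf_eq, not_forall] at hnot
  obtain ⟨i, j, hij, hjm, heq⟩ := hnot
  push_neg at heq
  have hjeq : j = m := by
    by_contra hj
    exact hmem i j hij (by omega) heq
  rw [hjeq] at hij heq
  rcases Nat.eq_zero_or_pos i with hi0 | hipos
  · subst hi0; exact Or.inl heq.symm
  rcases Nat.eq_zero_or_pos n with hn0 | hnpos
  · subst hn0
    left
    simp [window]
  right
  have hm1 : 1 ≤ m := by omega
  refine ⟨?_, i, hipos, hij, heq.symm⟩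
  refine ⟨u (m - 1), u (i - 1), ?_, ?_, ?_⟩
  · intro hab
    have : window u n (i-1) = window u n (m-1) := by
      rw [window_eq_iff]
      intro k hk
      rcases Nat.eq_zero_or_pos k with hk0 | hkpos
      · subst hk0; simpa using hab.symm
      · have := (window_eq_iff u n i m).mp heq (k-1) (by omega)
        have e1 : i - 1 + k = i + (k-1) := by omega
        have e2 : m - 1 + k = m + (k-1) := by omega
        rw [e1, e2, this]
    exact hmem (i-1) (m-1) (by omega) (by omega) this
  · refine ⟨m - 1, ?_⟩
    rw [show (u (m-1) :: window u n m).length = n + 1 by simp [window_length],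
        window_succ, Nat.sub_add_cancel hm1]
  · refine ⟨i - 1, ?_⟩
    rw [show (u (i-1) :: window u n m).length = n + 1 by simp [window_length],
        window_succ, Nat.sub_add_cancel (by omega : 1 ≤ i), heq]
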